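/- Over the Boolean semiring, the evaluation of the extended rule body with known head x — namely ∃z_1,...,z_{K-1}: r_1(x,z_1) ∧ L_1(z_1) ∧ r_2(z_1,z_2) ∧ L_2(z_2) ∧ ... ∧ r_K(z_{K-1}, y) ∧ L_K(y) — equals, for each y, the y-th entry of v_x^T · A_{r_1} · diag(v(L_1)) · A_{r_2} · diag(v(L_2)) · ... · A_{r_K} · diag(v(L_K)), where all products are Boolean. -/

import Mathlib

/-- Vector-matrix product over the Boolean semiring (`∨` as addition, `∧` as
multiplication). -/
def boolVecMul {n : ℕ} (u : Fin n → Bool) (A : Fin n → Fin n → Bool) (y : Fin n) : Bool :=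
  decide (∃ z, u z = true ∧ A z y = true)

/-- One step of the rule-body evaluation: chain through `A` (Boolean vector-matrix
product) and then multiply by `diag(L)` (elementwise AND with the constraint vector). -/
def boolStep {n : ℕ} (v : Fin n → Bool) (A : Fin n → Fin n → Bool) (L : Fin n → Bool) :
    Fin n → Bool :=
  fun y => boolVecMul v A y && L y

/-- Left-to-right Boolean evaluation of
`v^T · A_{r_1} · diag(v(L_1)) · ⋯ · A_{r_K} · diag(v(L_K))`. -/
def boolChainEval {n : ℕ} (v : Fin n → Bool) :
    List ((Fin n → Fin n → Bool) × (Fin n → Bool)) → Fin n → Bool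
  | [] => v
  | p :: rest => boolChainEval (boolStep v p.1 p.2) rest

theorem chain_iff {n : ℕ} (K : ℕ) (v : Fin n → Bool)
    (A : Fin K → Fin n → Fin n → Bool) (L : Fin K → Fin n → Bool) (y : Fin n) :
    boolChainEval v (List.ofFn fun k => (A k, L k)) y = true ↔
      ∃ z : Fin (K + 1) → Fin n, v (z 0) = true ∧ z (Fin.last K) = y ∧
        ∀ k : Fin K, A k (z k.castSucc) (z k.succ) = true ∧ L k (z k.succ) = true := by
  induction K generalizing v with
  | zero =>
    simp only [List.ofFn_zero, boolChainEval]
    constructor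
    · intro h
      exact ⟨fun _ => y, by simpa using h, rfl, fun k => k.elim0⟩
    · rintro ⟨z, hz0, hzl, -⟩
      rw [show (Fin.last 0) = 0 from rfl] at hzl
      rw [hzl] at hz0; exact hz0
  | succ K ih =>
    rw [List.ofFn_succ]
    show boolChainEval (boolStep v (A 0) (L 0)) _ y = true ↔ _
    rw [ih (boolStep v (A 0) (L 0)) (fun k => A k.succ) (fun k => L k.succ)]
    constructor
    · rintro ⟨z, h0, hl, hk⟩
      unfold boolStep boolVecMul at h0
      simp only [Bool.and_eq_true, decide_eq_true_eq] at h0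
      obtain ⟨⟨w, hw, hA⟩, hL⟩ := h0
      refine ⟨Fin.cons w z, by simpa using hw, ?_, ?_⟩
      · rw [← Fin.succ_last, Fin.cons_succ]; exact hl
      · intro k
        refine Fin.cases ?_ ?_ k
        · simpa [Fin.cons_succ] using ⟨hA, hL⟩
        · intro j
          simpa [← Fin.succ_castSucc, Fin.cons_succ] using hk j
    · rintro ⟨z, h0, hl, hk⟩
      refine ⟨Fin.tail z, ?_, ?_, ?_⟩
      · unfold boolStep boolVecMul
        simp only [Bool.and_eq_true, decide_eq_true_eq]
        refine ⟨⟨z 0, h0, ?_⟩, ?_⟩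
        · simpa [Fin.tail] using (hk 0).1
        · simpa [Fin.tail] using (hk 0).2
      · show z (Fin.last K).succ = y
        rw [Fin.succ_last]; exact hl
      · intro k
        have := hk k.succ
        simpa [Fin.tail, ← Fin.succ_castSucc] using this

/-- over the Boolean semiring, the `y`-th entry of
`v_x^T · A_{r_1} · diag(v(L_1)) · ⋯ · A_{r_K} · diag(v(L_K))` is true iff
`∃ z_1 … z_{K-1}, r_1(x,z_1) ∧ L_1(z_1) ∧ ⋯ ∧ r_K(z_{K-1},y) ∧ L_K(y)`,
i.e. iff there is a path `z_0 = x, z_1, …, z_K = y` with `A_k (z_{k-1}) (z_k)` and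
`L_k (z_k)` for all `k`. -/
theorem stmt_15 {n K : ℕ} [DecidableEq (Fin n)] (x : Fin n)
    (A : Fin K → Fin n → Fin n → Bool) (L : Fin K → Fin n → Bool) :
    ∀ y, boolChainEval (fun i => decide (i = x)) (List.ofFn fun k => (A k, L k)) y = true ↔
      ∃ z : Fin (K + 1) → Fin n, z 0 = x ∧ z (Fin.last K) = y ∧
        ∀ k : Fin K, A k (z k.castSucc) (z k.succ) = true ∧ L k (z k.succ) = true := by
  intro y
  rw [chain_iff]
  simp only [decide_eq_true_eq]
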